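/- For every n ≥ 1, the binary echelon tree T^be_n minimizes Δ_CS = C - S among all rooted binary trees with n leaves. -/

import Mathlib

/-- Rooted binary trees: a leaf, or an internal vertex with two child subtrees. -/
inductive BTree where
  | leaf : BTree
  | node : BTree → BTree → BTree
deriving DecidableEq

namespace BTree

/-- Number of leaves of a rooted binary tree. -/
def numLeaves : BTree → ℕ
  | leaf => 1
  | node l r => numLeaves l + numLeaves r

/-- Sackin index: sum over internal vertices `v` of `n_{v_a} + n_{v_b}`. -/
def sackin : BTree → ℕ
  | leaf => 0
  | node l r => sackin l + sackin r + (numLeaves l + numLeaves r)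

/-- Colless index: sum over internal vertices `v` of `|n_{v_a} - n_{v_b}|`. -/
def colless : BTree → ℕ
  | leaf => 0
  | node l r =>
      colless l + colless r +
        (max (numLeaves l) (numLeaves r) - min (numLeaves l) (numLeaves r))

/-- `N_a`: sum over internal vertices of the larger child-subtree leaf count. -/
def Na : BTree → ℕ
  | leaf => 0
  | node l r => Na l + Na r + max (numLeaves l) (numLeaves r)

/-- `N_b`: sum over internal vertices of the smaller child-subtree leaf count. -/
def Nb : BTree → ℕ
  | leaf => 0
  | node l r => Nb l + Nb r + min (numLeaves l) (numLeaves r)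

/-- `Δ_CS = C - S`, as an integer. -/
def deltaCS (T : BTree) : ℤ := (colless T : ℤ) - (sackin T : ℤ)

/-- Caterpillar trees: every internal vertex has at least one leaf child. -/
def isCaterpillar : BTree → Prop
  | leaf => True
  | node l r => (l = leaf ∧ isCaterpillar r) ∨ (r = leaf ∧ isCaterpillar l)

/-- The fully balanced tree of height `h`. -/
def fbTree : ℕ → BTree
  | 0 => leaf
  | h + 1 => node (fbTree h) (fbTree h)

end BTree

namespace BTree

/-- The binary echelon tree `T^be_n`: for `n > 1` with `k = ⌈log₂ n⌉`,
`T^be_n = (T^fb_{k-1}, T^be_{n - 2^{k-1}})`. -/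
def beTree : ℕ → BTree
  | 0 => leaf
  | 1 => leaf
  | n + 2 =>
      node (fbTree (Nat.clog 2 (n + 2) - 1))
        (beTree ((n + 2) - 2 ^ (Nat.clog 2 (n + 2) - 1)))
decreasing_by
  have : 0 < 2 ^ (Nat.clog 2 (n + 2) - 1) := pow_pos (by norm_num) _
  omega

end BTree

namespace BTree

/-- Summatory function of binary digit sums: the optimal value of `Nb`. -/
def fopt : ℕ → ℕ
  | 0 => 0
  | 1 => 0
  | n + 2 => fopt ((n+2)/2) + fopt ((n+3)/2) + (n+2)/2
decreasing_by all_goals omega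

theorem fopt_even (m : ℕ) : fopt (2*m) = 2 * fopt m + m := by
  match m with
  | 0 => simp [fopt]
  | m+1 =>
    have h : fopt (2*m+2) = fopt ((2*m+2)/2) + fopt ((2*m+3)/2) + (2*m+2)/2 := by
      conv_lhs => rw [fopt]
    have h1 : (2*m+2)/2 = m+1 := by omega
    have h2 : (2*m+3)/2 = m+1 := by omega
    rw [show 2*(m+1) = 2*m+2 by ring, h, h1, h2]; try ring

theorem fopt_odd (m : ℕ) : fopt (2*m+1) = fopt m + fopt (m+1) + m := by
  match m with
  | 0 => simp [fopt]
  | m+1 =>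
    have h : fopt (2*m+3) = fopt ((2*m+3)/2) + fopt ((2*m+4)/2) + (2*m+3)/2 := by
      conv_lhs => rw [fopt]
    have h1 : (2*m+3)/2 = m+1 := by omega
    have h2 : (2*m+4)/2 = m+2 := by omega
    rw [show 2*(m+1)+1 = 2*m+3 by ring, h, h1, h2]; try ring

theorem fopt_super : ∀ n a b : ℕ, a + b ≤ n → a ≤ b →
    fopt a + fopt b + a ≤ fopt (a + b) := by
  intro n
  induction n with
  | zero =>
    intro a b h1 h2
    have ha : a = 0 := by omega
    have hb : b = 0 := by omega
    subst ha; subst hb; simp [fopt]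
  | succ n ih =>
    intro a b hab hle
    rcases Nat.eq_zero_or_pos a with rfl | ha
    · simp [fopt]
    obtain ⟨a', (rfl|rfl)⟩ := Nat.even_or_odd' a <;>
      obtain ⟨b', (rfl|rfl)⟩ := Nat.even_or_odd' b
    · -- even, even
      have h1 := ih a' b' (by omega) (by omega)
      rw [fopt_even, fopt_even, show 2*a' + 2*b' = 2*(a'+b') by ring, fopt_even]
      omega
    · -- even, odd
      have h1 := ih a' b' (by omega) (by omega)
      have h2 := ih a' (b'+1) (by omega) (by omega)
      rw [show a' + (b'+1) = a'+b'+1 by omega] at h2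
      rw [fopt_even, fopt_odd, show 2*a' + (2*b'+1) = 2*(a'+b')+1 by ring, fopt_odd]
      omega
    · -- odd, even
      have h1 := ih a' b' (by omega) (by omega)
      have h2 := ih (a'+1) b' (by omega) (by omega)
      rw [show a'+1 + b' = a'+b'+1 by omega] at h2
      rw [fopt_odd, fopt_even, show 2*a'+1 + 2*b' = 2*(a'+b')+1 by ring, fopt_odd]
      omega
    · -- odd, odd
      have h1 := ih a' (b'+1) (by omega) (by omega)
      rw [fopt_odd, fopt_odd, show 2*a'+1 + (2*b'+1) = 2*(a'+b'+1) by ring, fopt_even]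
      rw [show a' + (b'+1) = a'+b'+1 by omega] at h1
      rcases eq_or_lt_of_le (show a' ≤ b' by omega) with rfl | hlt
      · omega
      · have h2 := ih (a'+1) b' (by omega) (by omega)
        rw [show a'+1 + b' = a'+b'+1 by omega] at h2
        omega

theorem fopt_split : ∀ h m : ℕ, m ≤ 2^h → fopt (2^h + m) = fopt (2^h) + fopt m + m := by
  intro h
  induction h with
  | zero => intro m hm; interval_cases m <;> simp [fopt]
  | succ h ih =>
    intro m hm
    obtain ⟨m', (rfl|rfl)⟩ := Nat.even_or_odd' m
    · have hm' : m' ≤ 2^h := by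
        have : (2:ℕ)^(h+1) = 2*2^h := by ring
        omega
      have e1 : fopt (2^(h+1) + 2*m') = 2 * fopt (2^h + m') + (2^h + m') := by
        rw [show (2:ℕ)^(h+1) + 2*m' = 2*(2^h + m') by ring, fopt_even]
      have e2 : fopt (2^(h+1)) = 2 * fopt (2^h) + 2^h := by
        rw [show (2:ℕ)^(h+1) = 2*2^h by ring, fopt_even]
      rw [e1, e2, ih m' hm', fopt_even]; ring
    · have hm1 : m' ≤ 2^h := by
        have : (2:ℕ)^(h+1) = 2*2^h := by ring
        omega
      have hm2 : m' + 1 ≤ 2^h := by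
        have : (2:ℕ)^(h+1) = 2*2^h := by ring
        omega
      have e1 : fopt (2^(h+1) + (2*m'+1))
          = fopt (2^h + m') + fopt (2^h + (m'+1)) + (2^h + m') := by
        rw [show (2:ℕ)^(h+1) + (2*m'+1) = 2*(2^h + m')+1 by ring, fopt_odd,
          show (2:ℕ)^h + m' + 1 = 2^h + (m'+1) by ring]
      have e2 : fopt (2^(h+1)) = 2 * fopt (2^h) + 2^h := by
        rw [show (2:ℕ)^(h+1) = 2*2^h by ring, fopt_even]
      rw [e1, e2, ih m' hm1, ih (m'+1) hm2, fopt_odd]; ring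

theorem numLeaves_pos (T : BTree) : 1 ≤ numLeaves T := by
  induction T with
  | leaf => simp [numLeaves]
  | node l r ihl ihr => simp [numLeaves]; omega

theorem sackin_eq (T : BTree) : sackin T = colless T + 2 * Nb T := by
  induction T with
  | leaf => simp [sackin, colless, Nb]
  | node l r ihl ihr =>
    simp only [sackin, colless, Nb]
    have h1 : max (numLeaves l) (numLeaves r) + min (numLeaves l) (numLeaves r)
        = numLeaves l + numLeaves r := max_add_min _ _
    have h2 : min (numLeaves l) (numLeaves r) ≤ max (numLeaves l) (numLeaves r) :=
      min_le_max
    omega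

theorem deltaCS_eq (T : BTree) : deltaCS T = -(2 * (Nb T : ℤ)) := by
  have := sackin_eq T
  unfold deltaCS
  have : (sackin T : ℤ) = (colless T : ℤ) + 2 * (Nb T : ℤ) := by exact_mod_cast this
  omega

theorem Nb_le (T : BTree) : Nb T ≤ fopt (numLeaves T) := by
  induction T with
  | leaf => simp [Nb, numLeaves, fopt]
  | node l r ihl ihr =>
    simp only [Nb, numLeaves]
    rcases le_total (numLeaves l) (numLeaves r) with h | h
    · have := fopt_super (numLeaves l + numLeaves r) (numLeaves l) (numLeaves r)
        le_rfl h
      omega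
    · have := fopt_super (numLeaves l + numLeaves r) (numLeaves r) (numLeaves l)
        (by omega) h
      rw [show numLeaves r + numLeaves l = numLeaves l + numLeaves r by ring] at this
      omega

theorem numLeaves_fb (h : ℕ) : numLeaves (fbTree h) = 2^h := by
  induction h with
  | zero => simp [fbTree, numLeaves]
  | succ h ih => simp [fbTree, numLeaves, ih]; ring

theorem Nb_fb (h : ℕ) : Nb (fbTree h) = fopt (2^h) := by
  induction h with
  | zero => simp [fbTree, Nb, fopt]
  | succ h ih =>
    simp only [fbTree, Nb, numLeaves_fb, ih, min_self]
    rw [show (2:ℕ)^(h+1) = 2*2^h by ring, fopt_even]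
    ring

theorem be_spec : ∀ n, 1 ≤ n → numLeaves (beTree n) = n ∧ Nb (beTree n) = fopt n := by
  intro n
  induction n using Nat.strong_induction_on with
  | _ n ih =>
    intro hn
    match n, hn with
    | 1, _ => simp [beTree, numLeaves, Nb, fopt]
    | (m+2), _ =>
      have hk1 : (m+2 : ℕ) ≤ 2 ^ Nat.clog 2 (m+2) := Nat.le_pow_clog (by norm_num) _
      have hk2 : 2 ^ (Nat.clog 2 (m+2) - 1) < m+2 :=
        by have := Nat.pow_pred_clog_lt_self (b := 2) (x := m+2) (by norm_num) (by omega); rwa [Nat.pred_eq_sub_one] at this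
      have hkpos : 1 ≤ Nat.clog 2 (m+2) := Nat.clog_pos (by norm_num) (by omega)
      have hdouble : 2 ^ Nat.clog 2 (m+2) = 2 * 2 ^ (Nat.clog 2 (m+2) - 1) := by
        rw [← pow_succ']
        congr 1
      set k1 := Nat.clog 2 (m+2) - 1 with hk1def
      set r := (m+2) - 2^k1 with hrdef
      have hr1 : 1 ≤ r := by omega
      have hr2 : r ≤ 2^k1 := by omega
      have hrlt : r < m + 2 := by
        have : 0 < 2^k1 := pow_pos (by norm_num) _
        omega
      have hbe : beTree (m+2) = node (fbTree k1) (beTree r) := by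
        conv_lhs => rw [beTree]
      obtain ⟨hL, hN⟩ := ih r hrlt hr1
      constructor
      · rw [hbe]; simp only [numLeaves, numLeaves_fb, hL]; omega
      · rw [hbe]
        simp only [Nb, numLeaves_fb, hL, Nb_fb, hN]
        rw [min_eq_right hr2, ← fopt_split k1 r hr2]
        congr 1
        omega

end BTree

open BTree in
/-- for every `n ≥ 1`, the binary echelon tree minimizes `Δ_CS`
among all rooted binary trees with `n` leaves. -/
theorem beTree_minimizes_deltaCS (n : ℕ) (hn : 1 ≤ n) :
    numLeaves (beTree n) = n ∧
      ∀ T : BTree, numLeaves T = n → deltaCS (beTree n) ≤ deltaCS T := by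
  have hbe := BTree.be_spec n hn
  refine ⟨hbe.1, fun T hT => ?_⟩
  rw [deltaCS_eq, deltaCS_eq, hbe.2]
  have h1 : Nb T ≤ fopt n := by
    have := Nb_le T
    rwa [hT] at this
  omega
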